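/- The integral over X from 0 to ∞ of (1/√π)·(2√X(X+1) − e^X √π X(2X+3)(1 − erf(√X))) equals 1. -/

import Mathlib

open Real MeasureTheory

/-- The Gauss error function. -/
noncomputable def erf (t : ℝ) : ℝ := (2 / Real.sqrt π) * ∫ s in (0 : ℝ)..t, Real.exp (-s ^ 2)

/-!
In the variable `t = √X` the integrand is `density t`, and it is the `X`-derivative of `cdf t`, an
explicit combination of polynomials and `erfcx t = exp (t ^ 2) * (1 - erf t)` with `cdf 0 = 0`.
Hence the integral is `lim cdf - cdf 0 = 1`, once we know that the integrand is nonnegative and that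
`cdf t → 1`. Both follow from the continued-fraction bounds
`t / (2 t² + 1) ≤ (√π / 2) erfcx t ≤ (t² + 1) / (t (2 t² + 3))`:
the upper one is exactly `density ≥ 0`, and the lower one matches it up to `O(t⁻⁵)`, which gives
`|cdf t - 1| = O(1 / t)`. Each bound is obtained by comparing `∫_t^∞ exp (-s²) ds` with the integral
of `-(d/ds) (exp (-s²) r(s))` for the corresponding rational function `r`.
-/

open Filter Topology Set

section ImproperComparison

variable {f g g' : ℝ → ℝ} {a : ℝ}

theorem integral_Ioi_le_of_hasDerivAt (hderiv : ∀ x ∈ Ici a, HasDerivAt g (g' x) x)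
    (hg' : ∀ x ∈ Ioi a, g' x ≤ 0) (hg : Tendsto g atTop (𝓝 0)) (hf : IntegrableOn f (Ioi a))
    (hfg : ∀ x ∈ Ioi a, f x ≤ -g' x) : ∫ x in Ioi a, f x ≤ g a := by
  calc ∫ x in Ioi a, f x
      ≤ ∫ x in Ioi a, -g' x :=
        setIntegral_mono_on hf (integrableOn_Ioi_deriv_of_nonpos' hderiv hg' hg).neg
          measurableSet_Ioi hfg
    _ = g a := by rw [integral_neg, integral_Ioi_of_hasDerivAt_of_nonpos' hderiv hg' hg]; ring

theorem le_integral_Ioi_of_hasDerivAt (hderiv : ∀ x ∈ Ici a, HasDerivAt g (g' x) x)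
    (hg' : ∀ x ∈ Ioi a, g' x ≤ 0) (hg : Tendsto g atTop (𝓝 0)) (hf : IntegrableOn f (Ioi a))
    (hgf : ∀ x ∈ Ioi a, -g' x ≤ f x) : g a ≤ ∫ x in Ioi a, f x := by
  calc g a = ∫ x in Ioi a, -g' x := by
        rw [integral_neg, integral_Ioi_of_hasDerivAt_of_nonpos' hderiv hg' hg]; ring
    _ ≤ ∫ x in Ioi a, f x :=
        setIntegral_mono_on (integrableOn_Ioi_deriv_of_nonpos' hderiv hg' hg).neg hf
          measurableSet_Ioi hgf

end ImproperComparison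

theorem integrable_exp_neg_sq : Integrable fun s : ℝ => exp (-s ^ 2) := by
  simpa using integrable_exp_neg_mul_sq one_pos

theorem hasDerivAt_erf (t : ℝ) : HasDerivAt erf (2 / √π * exp (-t ^ 2)) t :=
  (intervalIntegral.integral_hasDerivAt_right integrable_exp_neg_sq.intervalIntegrable
    ((by fun_prop : Continuous fun s : ℝ => exp (-s ^ 2)).stronglyMeasurableAtFilter _ _)
    (by fun_prop)).const_mul _

theorem continuous_erf : Continuous erf :=
  continuous_iff_continuousAt.2 fun t => (hasDerivAt_erf t).continuousAt

theorem one_sub_erf (t : ℝ) : 1 - erf t = 2 / √π * ∫ s in Ioi t, exp (-s ^ 2) := by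
  have hsplit := intervalIntegral.integral_interval_add_Ioi (a := 0) (b := t)
    integrable_exp_neg_sq.integrableOn integrable_exp_neg_sq.integrableOn
  have hgauss : ∫ s in Ioi (0 : ℝ), exp (-s ^ 2) = √π / 2 := by
    simpa using integral_gaussian_Ioi 1
  have : √π ≠ 0 := by positivity
  rw [hgauss] at hsplit
  rw [erf]
  field_simp
  linarith

theorem hasDerivAt_exp_neg_sq_mul {r : ℝ → ℝ} {r' t : ℝ} (hr : HasDerivAt r r' t) :
    HasDerivAt (fun x => exp (-x ^ 2) * r x) (exp (-t ^ 2) * (r' - 2 * t * r t)) t := by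
  have hexp : HasDerivAt (fun x : ℝ => exp (-x ^ 2)) (exp (-t ^ 2) * -(2 * t)) t := by
    exact (hasDerivAt_pow 2 t).fun_neg.exp.congr_deriv (by ring)
  exact (hexp.fun_mul hr).congr_deriv (by ring)

theorem tendsto_exp_neg_sq_mul_of_abs_le_one {r : ℝ → ℝ} (hr : ∀ᶠ x in atTop, |r x| ≤ 1) :
    Tendsto (fun x => exp (-x ^ 2) * r x) atTop (𝓝 0) := by
  have hexp : Tendsto (fun x : ℝ => exp (-x ^ 2)) atTop (𝓝 0) :=
    tendsto_exp_atBot.comp (tendsto_neg_atTop_atBot.comp (tendsto_pow_atTop two_ne_zero))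
  refine squeeze_zero_norm' ?_ hexp
  filter_upwards [hr] with x hx
  rw [norm_mul, norm_of_nonneg (exp_pos _).le]
  exact mul_le_of_le_one_right (exp_pos _).le hx

theorem integral_Ioi_exp_neg_sq_le {t : ℝ} (ht : 0 < t) :
    ∫ s in Ioi t, exp (-s ^ 2) ≤ exp (-t ^ 2) * ((t ^ 2 + 1) / (t * (2 * t ^ 2 + 3))) := by
  have hderiv : ∀ x ∈ Ici t,
      HasDerivAt (fun x => exp (-x ^ 2) * ((x ^ 2 + 1) / (x * (2 * x ^ 2 + 3))))
        (-(exp (-x ^ 2) * (1 + 3 / (x ^ 2 * (2 * x ^ 2 + 3) ^ 2)))) x := by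
    intro x hx
    have hx : x ≠ 0 := (ht.trans_le hx).ne'
    have hr := ((hasDerivAt_pow 2 x).add_const 1).fun_div
      ((hasDerivAt_id' x).fun_mul (((hasDerivAt_pow 2 x).const_mul 2).add_const 3))
      (mul_ne_zero hx (by positivity))
    convert hasDerivAt_exp_neg_sq_mul hr using 1
    field_simp
    ring
  refine integral_Ioi_le_of_hasDerivAt hderiv (fun x _ => ?_) ?_
    integrable_exp_neg_sq.integrableOn (fun x _ => ?_)
  · have : 0 ≤ 3 / (x ^ 2 * (2 * x ^ 2 + 3) ^ 2) := by positivity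
    nlinarith [exp_pos (-x ^ 2)]
  · refine tendsto_exp_neg_sq_mul_of_abs_le_one ?_
    filter_upwards [eventually_ge_atTop 1] with x hx
    rw [abs_of_nonneg (by positivity), div_le_one (by positivity)]
    nlinarith
  · have : 0 ≤ 3 / (x ^ 2 * (2 * x ^ 2 + 3) ^ 2) := by positivity
    nlinarith [exp_pos (-x ^ 2)]

theorem le_integral_Ioi_exp_neg_sq {t : ℝ} (ht : 1 ≤ t) :
    exp (-t ^ 2) * (t / (2 * t ^ 2 + 1)) ≤ ∫ s in Ioi t, exp (-s ^ 2) := by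
  have hderiv : ∀ x ∈ Ici t, HasDerivAt (fun x => exp (-x ^ 2) * (x / (2 * x ^ 2 + 1)))
      (-(exp (-x ^ 2) * (1 - 2 / (2 * x ^ 2 + 1) ^ 2))) x := by
    intro x _
    have hr := (hasDerivAt_id' x).fun_div (((hasDerivAt_pow 2 x).const_mul 2).add_const 1)
      (by positivity)
    convert hasDerivAt_exp_neg_sq_mul hr using 1
    field_simp
    ring
  refine le_integral_Ioi_of_hasDerivAt hderiv (fun x hx => ?_) ?_
    integrable_exp_neg_sq.integrableOn (fun x _ => ?_)
  · have hx : 1 ≤ x := ht.trans hx.le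
    have : 2 / (2 * x ^ 2 + 1) ^ 2 ≤ 1 := by
      rw [div_le_one (by positivity)]
      nlinarith
    nlinarith [exp_pos (-x ^ 2)]
  · refine tendsto_exp_neg_sq_mul_of_abs_le_one ?_
    filter_upwards [eventually_ge_atTop 0] with x hx
    rw [abs_of_nonneg (by positivity), div_le_one (by positivity)]
    nlinarith
  · have : 0 ≤ 2 / (2 * x ^ 2 + 1) ^ 2 := by positivity
    nlinarith [exp_pos (-x ^ 2)]

noncomputable def erfcx (t : ℝ) : ℝ := exp (t ^ 2) * (1 - erf t)

theorem erfcx_zero : erfcx 0 = 1 := by simp [erfcx, erf]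

theorem hasDerivAt_erfcx (t : ℝ) : HasDerivAt erfcx (2 * t * erfcx t - 2 / √π) t := by
  have hsq : HasDerivAt (fun x : ℝ => exp (x ^ 2)) (exp (t ^ 2) * (2 * t)) t := by
    exact (hasDerivAt_pow 2 t).exp.congr_deriv (by ring)
  refine (hsq.fun_mul ((hasDerivAt_erf t).const_sub 1)).congr_deriv ?_
  have hcancel : exp (t ^ 2) * exp (-t ^ 2) = 1 := by rw [← exp_add, add_neg_cancel, exp_zero]
  rw [erfcx]
  linear_combination (-(2 / √π)) * hcancel

theorem erfcx_eq (t : ℝ) : erfcx t = 2 / √π * (exp (t ^ 2) * ∫ s in Ioi t, exp (-s ^ 2)) := by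
  rw [erfcx, one_sub_erf]
  ring

theorem erfcx_le {t : ℝ} (ht : 0 < t) :
    erfcx t ≤ 2 / √π * ((t ^ 2 + 1) / (t * (2 * t ^ 2 + 3))) := by
  rw [erfcx_eq]
  gcongr
  calc exp (t ^ 2) * ∫ s in Ioi t, exp (-s ^ 2)
      ≤ exp (t ^ 2) * (exp (-t ^ 2) * ((t ^ 2 + 1) / (t * (2 * t ^ 2 + 3)))) := by
        gcongr
        exact integral_Ioi_exp_neg_sq_le ht
    _ = (t ^ 2 + 1) / (t * (2 * t ^ 2 + 3)) := by rw [← mul_assoc, ← exp_add]; simp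

theorem le_erfcx {t : ℝ} (ht : 1 ≤ t) : 2 / √π * (t / (2 * t ^ 2 + 1)) ≤ erfcx t := by
  rw [erfcx_eq]
  gcongr
  calc t / (2 * t ^ 2 + 1) = exp (t ^ 2) * (exp (-t ^ 2) * (t / (2 * t ^ 2 + 1))) := by
        rw [← mul_assoc, ← exp_add]; simp
    _ ≤ exp (t ^ 2) * ∫ s in Ioi t, exp (-s ^ 2) := by
        gcongr
        exact le_integral_Ioi_exp_neg_sq ht

namespace HullPerimeter

/-! In the variable `t = √X`: `density t` is the density of `X` at `t ^ 2`, and `cdf t` is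
`P(X ≤ t ^ 2)`. -/

noncomputable def density (t : ℝ) : ℝ :=
  2 / √π * (t * (t ^ 2 + 1)) - t ^ 2 * (2 * t ^ 2 + 3) * erfcx t

noncomputable def cdf (t : ℝ) : ℝ :=
  1 + 2 / √π * (t * (t ^ 2 - 1)) - (2 * t ^ 4 - t ^ 2 + 1) * erfcx t

theorem cdf_zero : cdf 0 = 0 := by simp [cdf, erfcx_zero]

theorem hasDerivAt_cdf (t : ℝ) : HasDerivAt cdf (2 * t * density t) t := by
  have hpoly : HasDerivAt (fun x : ℝ => 1 + 2 / √π * (x * (x ^ 2 - 1)))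
      (2 / √π * (3 * t ^ 2 - 1)) t := by
    refine ((((hasDerivAt_id' t).fun_mul ((hasDerivAt_pow 2 t).sub_const 1)).const_mul
      (2 / √π)).const_add 1).congr_deriv ?_
    ring
  have hcoef : HasDerivAt (fun x : ℝ => 2 * x ^ 4 - x ^ 2 + 1) (8 * t ^ 3 - 2 * t) t := by
    refine ((((hasDerivAt_pow 4 t).const_mul 2).fun_sub (hasDerivAt_pow 2 t)).add_const
      1).congr_deriv ?_
    ring
  refine (hpoly.fun_sub (hcoef.fun_mul (hasDerivAt_erfcx t))).congr_deriv ?_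
  rw [density]
  ring

theorem continuous_cdf : Continuous cdf :=
  continuous_iff_continuousAt.2 fun t => (hasDerivAt_cdf t).continuousAt

theorem density_nonneg {t : ℝ} (ht : 0 < t) : 0 ≤ density t := by
  have hbound := mul_le_mul_of_nonneg_left (erfcx_le ht)
    (by positivity : 0 ≤ t ^ 2 * (2 * t ^ 2 + 3))
  have hcancel : t ^ 2 * (2 * t ^ 2 + 3) * (2 / √π * ((t ^ 2 + 1) / (t * (2 * t ^ 2 + 3)))) =
      2 / √π * (t * (t ^ 2 + 1)) := by
    field_simp
  rw [density]
  linarith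

theorem abs_cdf_sub_one_le {t : ℝ} (ht : 1 ≤ t) : |cdf t - 1| ≤ 2 / √π * (2 / t) := by
  have ht0 : 0 < t := one_pos.trans_le ht
  have hc : 0 ≤ 2 * t ^ 4 - t ^ 2 + 1 := by nlinarith [sq_nonneg (t ^ 2 - 1)]
  have hupper := mul_le_mul_of_nonneg_left (erfcx_le ht0) hc
  have hlower := mul_le_mul_of_nonneg_left (le_erfcx ht) hc
  have hupper_eq : (2 * t ^ 4 - t ^ 2 + 1) * (2 / √π * ((t ^ 2 + 1) / (t * (2 * t ^ 2 + 3)))) =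
      2 / √π * (t * (t ^ 2 - 1)) + 2 / √π * ((3 * t ^ 2 + 1) / (t * (2 * t ^ 2 + 3))) := by
    field_simp
    ring
  have hlower_eq : (2 * t ^ 4 - t ^ 2 + 1) * (2 / √π * (t / (2 * t ^ 2 + 1))) =
      2 / √π * (t * (t ^ 2 - 1)) + 2 / √π * (2 * t / (2 * t ^ 2 + 1)) := by
    field_simp
    ring
  have hfrac : (3 * t ^ 2 + 1) / (t * (2 * t ^ 2 + 3)) ≤ 2 / t := by
    rw [div_le_div_iff₀ (by positivity) ht0]
    nlinarith
  have hk : 0 < 2 / √π := by positivity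
  have h1 := mul_le_mul_of_nonneg_left hfrac hk.le
  have h2 : 0 ≤ 2 / √π * (2 * t / (2 * t ^ 2 + 1)) := by positivity
  have h3 : 0 ≤ 2 / √π * (2 / t) := by positivity
  rw [cdf, abs_le]
  constructor <;> linarith

theorem tendsto_cdf : Tendsto cdf atTop (𝓝 1) := by
  rw [tendsto_iff_norm_sub_tendsto_zero]
  refine squeeze_zero' (Eventually.of_forall fun t => norm_nonneg _) ?_
    (by simpa using (tendsto_const_nhds (x := (2 : ℝ)).div_atTop tendsto_id).const_mul (2 / √π))
  filter_upwards [eventually_ge_atTop 1] with t ht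
  exact abs_cdf_sub_one_le ht

theorem hasDerivAt_cdf_sqrt {X : ℝ} (hX : 0 < X) : HasDerivAt (cdf ∘ sqrt) (density √X) X := by
  have hsqrt : √X ≠ 0 := (sqrt_pos.2 hX).ne'
  refine ((hasDerivAt_cdf √X).comp X (hasDerivAt_sqrt hX.ne')).congr_deriv ?_
  field_simp

theorem density_sqrt {X : ℝ} (hX : 0 ≤ X) :
    density √X = 1 / √π * (2 * √X * (X + 1) - exp X * √π * X * (2 * X + 3) * (1 - erf √X)) := by
  have : √π ≠ 0 := by positivity
  rw [density, erfcx, sq_sqrt hX]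
  field_simp

end HullPerimeter

theorem density_in_rescaled_integrates_to_one :
    ∫ X in Set.Ioi (0 : ℝ),
      (1 / Real.sqrt π) *
        (2 * Real.sqrt X * (X + 1) -
          Real.exp X * Real.sqrt π * X * (2 * X + 3) * (1 - erf (Real.sqrt X))) = 1 := by
  calc _ = ∫ X in Ioi (0 : ℝ), HullPerimeter.density √X :=
        setIntegral_congr_fun measurableSet_Ioi fun X hX =>
          (HullPerimeter.density_sqrt hX.le).symm
    _ = 1 - HullPerimeter.cdf √0 :=
        integral_Ioi_of_hasDerivAt_of_nonneg
          (HullPerimeter.continuous_cdf.comp continuous_sqrt).continuousWithinAt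
          (fun X hX => HullPerimeter.hasDerivAt_cdf_sqrt hX)
          (fun X hX => HullPerimeter.density_nonneg (sqrt_pos.2 hX))
          (HullPerimeter.tendsto_cdf.comp tendsto_sqrt_atTop)
    _ = 1 := by simp [HullPerimeter.cdf_zero]
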